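/- arXiv:2405.00917 — 5 statements merged into one kernel-verified Lean document; each statement's English description precedes it below -/
import Mathlib

section
/- Let X be a random variable taking values in {0,1,...,d} with mean μ ∈ (0,d). Then Var(X) ≥ R(μ), where R(μ) = (⌊μ⌋+1-μ)(μ-⌊μ⌋). -/
open MeasureTheory ProbabilityTheory

theorem stmt1 {Ω : Type*} [MeasureSpace Ω] [IsProbabilityMeasure (ℙ : Measure Ω)]
    (d : ℕ) (hd : 0 < d) (X : Ω → ℝ) (hX : Measurable X)
    (hrange : ∀ᵐ ω : Ω, ∃ n : ℤ, 0 ≤ n ∧ n ≤ (d : ℤ) ∧ X ω = (n : ℝ))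
    (μ : ℝ) (hμ0 : 0 < μ) (hμd : μ < d)
    (hmean : ∫ ω, X ω = μ) :
    ((⌊μ⌋ : ℝ) + 1 - μ) * (μ - (⌊μ⌋ : ℝ)) ≤ variance X ℙ := by
  set m : ℤ := ⌊μ⌋ with hm
  have hbound : ∀ᵐ ω : Ω, ‖X ω‖ ≤ (d : ℝ) := by
    filter_upwards [hrange] with ω hω
    obtain ⟨n, hn0, hnd, hXn⟩ := hω
    rw [hXn, Real.norm_eq_abs, abs_of_nonneg (by exact_mod_cast hn0)]
    exact_mod_cast hnd
  have hmem : MemLp X 2 ℙ := MemLp.of_bound hX.aestronglyMeasurable _ hbound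
  have hint : Integrable X ℙ := hmem.integrable (by norm_num)
  have hint2 : Integrable (fun ω => X ω ^ 2) ℙ := hmem.integrable_sq
  have key : 0 ≤ ∫ ω, (X ω - m) * (X ω - m - 1) := by
    apply integral_nonneg_of_ae
    filter_upwards [hrange] with ω hω
    obtain ⟨n, _, _, hXn⟩ := hω
    rw [hXn]
    have h : (0:ℤ) ≤ (n - m) * (n - m - 1) := by
      rcases le_or_gt n m with h | h
      · nlinarith
      · exact mul_nonneg (by omega) (by omega)
    have h' : (0:ℝ) ≤ ((n:ℝ) - m) * ((n:ℝ) - m - 1) := by exact_mod_cast h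
    exact h'
  have hexp : ∫ ω, (X ω - m) * (X ω - m - 1)
      = (∫ ω, X ω ^ 2) - (2*(m:ℝ)+1) * μ + (m:ℝ)*((m:ℝ)+1) := by
    have heq : ∀ ω, (X ω - m) * (X ω - m - 1)
        = X ω ^ 2 - (2*(m:ℝ)+1) * X ω + (m:ℝ)*((m:ℝ)+1) := by intro ω; ring
    simp_rw [heq]
    have h2 : Integrable (fun ω => (2*(m:ℝ)+1) * X ω) ℙ := hint.const_mul _
    have h1 : Integrable (fun ω => X ω ^ 2 - (2*(m:ℝ)+1) * X ω) ℙ := hint2.sub h2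
    rw [integral_add h1 (integrable_const _), integral_sub hint2 h2,
      integral_const_mul, hmean, integral_const]
    simp
  have hvar : variance X ℙ = (∫ ω, X ω ^ 2) - μ ^ 2 := by
    rw [variance_eq_sub hmem, hmean]
    simp [Pi.pow_apply]
  nlinarith [key, hexp, hvar]
end

section
/- Let F(u) = (1/2)e^u for u ≤ 0 and 1 - (1/2)e^{-u} for u > 0 (the standard Laplace CDF), Lσ(u) = -σ log(1 - F(u/σ)), s(σ|d) = (d/2)/(d/2 + σ log 2), and CLσ(u|d) = s(σ|d)(Lσ(u) - u - Lσ(d-u)) + (d/2)(1 + s(σ|d)). Then for all u ∈ [0,d] and σ > 0, CLσ(u|d) = s(σ|d)·u + (d/2)(1 - s(σ|d)), i.e., CLσ(·|d) is affine-linear on [0,d]. -/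
/-! On `[0, ∞)` the Laplace survival function is `1 - F x = exp (-x) / 2`, so `L σ u = u + σ log 2`
for `u ≥ 0`. For `u ∈ [0, d]` both `u` and `d - u` are nonnegative, the terms `u` cancel in
`L σ u - u - L σ (d - u)`, and `CL σ d u` is affine in `u`. -/

noncomputable def F (u : ℝ) : ℝ := if u ≤ 0 then Real.exp u / 2 else 1 - Real.exp (-u) / 2

noncomputable def L (σ u : ℝ) : ℝ := -σ * Real.log (1 - F (u / σ))

noncomputable def s (σ d : ℝ) : ℝ := (d / 2) / (d / 2 + σ * Real.log 2)

noncomputable def CL (σ d u : ℝ) : ℝ :=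
  s σ d * (L σ u - u - L σ (d - u)) + d / 2 * (1 + s σ d)

open Real

lemma F_of_nonneg {x : ℝ} (hx : 0 ≤ x) : F x = 1 - exp (-x) / 2 := by
  rcases hx.eq_or_lt with rfl | hx
  · norm_num [F]
  · exact if_neg hx.not_ge

lemma log_one_sub_F_of_nonneg {x : ℝ} (hx : 0 ≤ x) : log (1 - F x) = -x - log 2 := by
  rw [F_of_nonneg hx, sub_sub_cancel, log_div (exp_ne_zero _) two_ne_zero, log_exp]

lemma L_of_nonneg {σ u : ℝ} (hσ : 0 < σ) (hu : 0 ≤ u) : L σ u = u + σ * log 2 := by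
  rw [L, log_one_sub_F_of_nonneg (div_nonneg hu hσ.le)]
  field_simp
  ring

theorem stmt13_general (d : ℝ) (σ : ℝ) (hσ : 0 < σ)
    (u : ℝ) (hu : u ∈ Set.Icc (0 : ℝ) d) :
    CL σ d u = s σ d * u + d / 2 * (1 - s σ d) := by
  obtain ⟨hu₀, hud⟩ := hu
  rw [CL, L_of_nonneg hσ hu₀, L_of_nonneg hσ (sub_nonneg.mpr hud)]
  ring

theorem stmt13 (d : ℝ) (hd : 0 < d) (σ : ℝ) (hσ : 0 < σ)
    (u : ℝ) (hu : u ∈ Set.Icc (0 : ℝ) d) :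
    CL σ d u = s σ d * u + d / 2 * (1 - s σ d) :=
  stmt13_general d σ hσ u hu
end

section
/- For fixed u ∈ ℝ and d > 0, lim_{σ→0⁺} CLσ(u|d) = min(max(u,0), d), i.e., the clipped-Laplace link converges pointwise to the clipped ReLU function as σ → 0⁺. -/
/-!
For `σ > 0` the smoothed ReLU `L σ` stays within `σ log 2` of the ReLU: for `v > 0` it equals
`v + σ log 2` exactly, and for `v ≤ 0` the argument `1 - eᵛᐟᵟ/2` of the logarithm lies in
`[1/2, 1]`, so `0 ≤ L σ v ≤ σ log 2`. Hence `L σ → max · 0` and `s σ d → 1` as `σ → 0⁺`, and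
`CL σ d u` tends to `max u 0 - u - max (d - u) 0 + d`, which is the clipped ReLU once `d ≥ 0`.
-/

open Filter Topology Real

section L

variable {σ v : ℝ}

lemma L_of_pos (hσ : 0 < σ) (hv : 0 < v) : L σ v = v + σ * log 2 := by
  have hF : 1 - F (v / σ) = exp (-(v / σ)) / 2 := by
    rw [F, if_neg (div_pos hv hσ).not_ge]
    ring
  rw [L, hF, log_div (exp_ne_zero _) two_ne_zero, log_exp]
  field_simp
  ring

lemma log_one_sub_F_mem_Icc (hv : v ≤ 0) : log (1 - F v) ∈ Set.Icc (-log 2) 0 := by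
  have hexp : exp v ≤ 1 := exp_le_one_iff.2 hv
  have hF : 1 - F v = 1 - exp v / 2 := by rw [F, if_pos hv]
  have hhalf : 1 / 2 ≤ 1 - F v := by rw [hF]; linarith
  refine ⟨?_, log_nonpos (by linarith) (by rw [hF]; linarith [exp_pos v])⟩
  calc -log 2 = log (1 / 2) := by rw [one_div, log_inv]
    _ ≤ log (1 - F v) := log_le_log (by norm_num) hhalf

lemma max_le_L (hσ : 0 < σ) : max v 0 ≤ L σ v := by
  rcases le_or_gt v 0 with hv | hv
  · rw [max_eq_right hv, L]
    have := (log_one_sub_F_mem_Icc (div_nonpos_of_nonpos_of_nonneg hv hσ.le)).2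
    nlinarith
  · rw [max_eq_left hv.le, L_of_pos hσ hv]
    have := log_pos one_lt_two
    nlinarith

lemma L_le_max_add (hσ : 0 < σ) : L σ v ≤ max v 0 + σ * log 2 := by
  rcases le_or_gt v 0 with hv | hv
  · rw [max_eq_right hv, L]
    have := (log_one_sub_F_mem_Icc (div_nonpos_of_nonpos_of_nonneg hv hσ.le)).1
    nlinarith
  · rw [max_eq_left hv.le, L_of_pos hσ hv]

end L

theorem tendsto_L (v : ℝ) : Tendsto (fun σ => L σ v) (𝓝[>] 0) (𝓝 (max v 0)) := by
  have hupper : Tendsto (fun σ : ℝ => max v 0 + σ * log 2) (𝓝[>] 0) (𝓝 (max v 0)) := by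
    have h : Tendsto (fun σ : ℝ => max v 0 + σ * log 2) (𝓝 0) (𝓝 (max v 0 + 0 * log 2)) :=
      tendsto_const_nhds.add (tendsto_id.mul_const _)
    simpa using h.mono_left nhdsWithin_le_nhds
  refine tendsto_of_tendsto_of_tendsto_of_le_of_le' tendsto_const_nhds hupper ?_ ?_ <;>
    filter_upwards [self_mem_nhdsWithin] with σ hσ
  exacts [max_le_L hσ, L_le_max_add hσ]

theorem tendsto_s {d : ℝ} (hd : d ≠ 0) : Tendsto (fun σ => s σ d) (𝓝 0) (𝓝 1) := by
  have hd2 : d / 2 ≠ 0 := by positivity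
  have h : ContinuousAt (fun σ => s σ d) 0 :=
    continuousAt_const.div (continuousAt_const.add (continuousAt_id.mul continuousAt_const))
      (by simpa using hd2)
  simpa [s, hd2] using h.tendsto

lemma max_sub_sub_max_add_eq_min {d : ℝ} (hd : 0 ≤ d) (u : ℝ) :
    max u 0 - u - max (d - u) 0 + d = min (max u 0) d := by
  rcases le_total u 0 with hu | hu
  · rw [max_eq_right hu, max_eq_left (by linarith), min_eq_left hd]
    ring
  rcases le_total u d with hud | hud
  · rw [max_eq_left hu, max_eq_left (by linarith), min_eq_left hud]
    ring
  · rw [max_eq_left hu, max_eq_right (by linarith), min_eq_right hud]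
    ring

theorem stmt15 (d : ℝ) (hd : 0 < d) (u : ℝ) :
    Tendsto (fun σ : ℝ => CL σ d u) (nhdsWithin 0 (Set.Ioi 0))
      (nhds (min (max u 0) d)) := by
  have hs := (tendsto_s hd.ne').mono_left (nhdsWithin_le_nhds (s := Set.Ioi 0))
  have hCL : Tendsto (fun σ => CL σ d u) (𝓝[>] 0)
      (𝓝 (1 * (max u 0 - u - max (d - u) 0) + d / 2 * (1 + 1))) :=
    (hs.mul (((tendsto_L u).sub tendsto_const_nhds).sub (tendsto_L (d - u)))).add
      (tendsto_const_nhds.mul (tendsto_const_nhds.add hs))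
  rw [← max_sub_sub_max_add_eq_min hd.le]
  convert hCL using 2
  ring
end

section
/- The clipped-Laplace link CLσ(·|d) is point symmetric about (d/2, d/2): for all v ∈ ℝ, CLσ(d/2 + v | d) - d/2 = -(CLσ(d/2 - v | d) - d/2). In particular CLσ(d/2|d) = d/2. -/
theorem CL_add_CL_sub (σ d u : ℝ) : CL σ d u + CL σ d (d - u) = d := by
  simp only [CL, sub_sub_cancel]
  ring

theorem stmt16_general (d : ℝ) (σ : ℝ) :
    (∀ v : ℝ, CL σ d (d / 2 + v) - d / 2 = -(CL σ d (d / 2 - v) - d / 2)) ∧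
    CL σ d (d / 2) = d / 2 := by
  have point_symm : ∀ v : ℝ, CL σ d (d / 2 + v) - d / 2 = -(CL σ d (d / 2 - v) - d / 2) := by
    intro v
    have h := CL_add_CL_sub σ d (d / 2 + v)
    rw [show d - (d / 2 + v) = d / 2 - v by ring] at h
    linarith
  refine ⟨point_symm, ?_⟩
  have h := point_symm 0
  rw [add_zero, sub_zero] at h
  linarith

theorem stmt16 (d : ℝ) (hd : 0 < d) (σ : ℝ) (hσ : 0 < σ) :
    (∀ v : ℝ, CL σ d (d / 2 + v) - d / 2 = -(CL σ d (d / 2 - v) - d / 2)) ∧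
    CL σ d (d / 2) = d / 2 :=
  stmt16_general d σ
end

section
/- For all u ∈ ℝ and σ > 0, CLσ(u|d) ≤ d/2 + max(u,0). -/
lemma L_pos_eq (σ : ℝ) (hσ : 0 < σ) (x : ℝ) (hx : 0 < x) :
    L σ x = x + σ * Real.log 2 := by
  have hxσ : 0 < x / σ := div_pos hx hσ
  unfold L F
  rw [if_neg (by linarith)]
  have h1 : (1 : ℝ) - (1 - Real.exp (-(x / σ)) / 2) = Real.exp (-(x / σ)) / 2 := by ring
  rw [h1, Real.log_div (Real.exp_ne_zero _) two_ne_zero, Real.log_exp]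
  field_simp
  ring

lemma L_nonpos_bounds (σ : ℝ) (hσ : 0 < σ) (x : ℝ) (hx : x ≤ 0) :
    0 ≤ L σ x ∧ L σ x ≤ σ * Real.log 2 := by
  have hxσ : x / σ ≤ 0 := div_nonpos_of_nonpos_of_nonneg hx hσ.le
  have he : Real.exp (x / σ) ≤ 1 := Real.exp_le_one_iff.mpr hxσ
  have hepos : 0 < Real.exp (x / σ) := Real.exp_pos _
  unfold L F
  rw [if_pos hxσ]
  have hlb : (1 : ℝ) / 2 ≤ 1 - Real.exp (x / σ) / 2 := by linarith
  have hub : (1 : ℝ) - Real.exp (x / σ) / 2 ≤ 1 := by linarith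
  constructor
  · have := Real.log_nonpos (by linarith) hub
    nlinarith
  · have := Real.log_le_log (by norm_num) hlb
    rw [Real.log_div one_ne_zero two_ne_zero, Real.log_one] at this
    nlinarith

lemma L_nonneg (σ : ℝ) (hσ : 0 < σ) (x : ℝ) : 0 ≤ L σ x := by
  rcases le_or_gt x 0 with h | h
  · exact (L_nonpos_bounds σ hσ x h).1
  · rw [L_pos_eq σ hσ x h]
    have := Real.log_pos (by norm_num : (1:ℝ) < 2)
    nlinarith

theorem stmt18 (d : ℝ) (hd : 0 < d) (σ : ℝ) (hσ : 0 < σ) (u : ℝ) :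
    CL σ d u ≤ d / 2 + max u 0 := by
  have hc : 0 < σ * Real.log 2 := mul_pos hσ (Real.log_pos one_lt_two)
  set c := σ * Real.log 2 with hcdef
  have hden : 0 < d / 2 + c := by linarith
  have hs_pos : 0 < s σ d := div_pos (by linarith) hden
  have hs_le : s σ d ≤ 1 := by
    rw [s, div_le_one hden]; linarith
  have hs_mul : s σ d * (d / 2 + c) = d / 2 := by
    rw [s]; field_simp
    linear_combination 2 * hcdef
  have key : s σ d * (L σ u - u - L σ (d - u) + d / 2) ≤ max u 0 := by
    rcases le_or_gt u 0 with hu | hu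
    · rw [max_eq_right hu]
      have hdu : 0 < d - u := by linarith
      have h1 : L σ (d - u) = (d - u) + c := L_pos_eq σ hσ _ hdu
      have h2 := (L_nonpos_bounds σ hσ u hu).2
      have hA : L σ u - u - L σ (d - u) + d / 2 ≤ 0 := by
        rw [h1]; linarith
      exact mul_nonpos_of_nonneg_of_nonpos hs_pos.le hA
    · rw [max_eq_left hu.le]
      have h1 : L σ u = u + c := L_pos_eq σ hσ u hu
      rcases le_or_gt (d - u) 0 with hdu | hdu
      · have h2 := L_nonneg σ hσ (d - u)
        have hA : L σ u - u - L σ (d - u) + d / 2 ≤ c + d / 2 := by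
          rw [h1]; linarith
        calc s σ d * (L σ u - u - L σ (d - u) + d / 2)
            ≤ s σ d * (c + d / 2) := by
              exact mul_le_mul_of_nonneg_left hA hs_pos.le
          _ = d / 2 := by rw [add_comm c (d/2)]; exact hs_mul
          _ ≤ u := by linarith
      · have h2 : L σ (d - u) = (d - u) + c := L_pos_eq σ hσ _ hdu
        have hA : L σ u - u - L σ (d - u) + d / 2 = u - d / 2 := by
          rw [h1, h2]; ring
        rw [hA]
        nlinarith [mul_nonneg (sub_nonneg.mpr hs_le) hu.le, mul_pos hs_pos hd]
  have : CL σ d u = s σ d * (L σ u - u - L σ (d - u) + d / 2) + d / 2 := by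
    rw [CL]; ring
  linarith
end
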